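/- Let μ and μ' be two stable matchings of the same stable marriage instance. Define τ : M → W by letting τ(m) be whichever of μ(m) and μ'(m) the man m prefers less (the ≻_m-worse of the two, taking τ(m) = μ(m) if μ(m) = μ'(m)). Then τ is a bijection from M to W and τ is a stable matching. -/

import Mathlib

/-- A stable marriage instance: finite sets `M` of men and `W` of women of equal
positive cardinality, with strict total preference orders for each agent. -/
structure SMInstance (M W : Type) [Fintype M] [Fintype W] where
  card_eq : Fintype.card M = Fintype.card W
  card_pos : 1 ≤ Fintype.card M
  prefM : M → W → W → Prop
  prefW : W → M → M → Prop
  prefM_sto : ∀ m, IsStrictTotalOrder W (prefM m)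
  prefW_sto : ∀ w, IsStrictTotalOrder M (prefW w)

/-- A pair `(m, w)` blocks the matching `μ` if `w ≻_m μ(m)` and `m ≻_w μ⁻¹(w)`. -/
def SMInstance.Blocks {M W : Type} [Fintype M] [Fintype W]
    (I : SMInstance M W) (μ : M ≃ W) (m : M) (w : W) : Prop :=
  I.prefM m w (μ m) ∧ I.prefW w m (μ.symm w)

/-- A matching is stable if no pair blocks it. -/
def SMInstance.Stable {M W : Type} [Fintype M] [Fintype W]
    (I : SMInstance M W) (μ : M ≃ W) : Prop :=
  ∀ m w, ¬ I.Blocks μ m w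

/-!
Let `A` be the set of men who strictly prefer their `μ`-partner, so that `τ = μ'` on `A` and
`τ = μ` off `A`. If `m ∈ A` and `m''` is the `μ'`-partner of `w = μ m`, then `m'' ∈ A`: otherwise
`m` wants `w` over his `μ'`-partner and `m''` wants `w` over his `μ`-partner, and whichever of the
two `w` prefers blocks `μ` or `μ'`. Hence `μ '' A ⊆ μ' '' A`, with equality by finiteness, and `τ`
is a bijection. The same crossing argument shows that every woman weakly prefers her `τ`-partner
to her partners in `μ` and `μ'`, so a pair blocking `τ` would block whichever of `μ`, `μ'`
gives the man his `τ`-partner.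
-/

theorem Equiv.image_eq_of_image_subset {α β : Type*} (e e' : α ≃ β) {s : Set α}
    (hs : s.Finite) (h : e '' s ⊆ e' '' s) : e '' s = e' '' s :=
  Set.eq_of_subset_of_ncard_le h
    (by rw [Set.ncard_image_of_injective s e.injective, Set.ncard_image_of_injective s e'.injective])
    (hs.image e')

theorem Equiv.bijective_of_eqOn_of_eqOn_compl {α β : Type*} (e e' : α ≃ β) {s : Set α}
    {f : α → β} (hs : Set.EqOn f e' s) (hsc : Set.EqOn f e sᶜ) (h : e '' s = e' '' s) :
    Function.Bijective f := by
  refine ⟨fun a b hab => ?_, fun y => ?_⟩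
  · have hcross : ∀ {a b}, a ∈ s → b ∉ s → f a ≠ f b := by
      intro a b ha hb hab
      obtain ⟨c, hc, hce⟩ : e' a ∈ e '' s := h ▸ Set.mem_image_of_mem e' ha
      rw [hs ha, hsc hb, ← hce] at hab
      exact hb (e.injective hab ▸ hc)
    by_cases ha : a ∈ s <;> by_cases hb : b ∈ s
    · rw [hs ha, hs hb] at hab; exact e'.injective hab
    · exact absurd hab (hcross ha hb)
    · exact absurd hab.symm (hcross hb ha)
    · rw [hsc ha, hsc hb] at hab; exact e.injective hab
  · by_cases hy : y ∈ e' '' s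
    · obtain ⟨a, ha, rfl⟩ := hy
      exact ⟨a, hs ha⟩
    · refine ⟨e.symm y, (hsc fun ha => hy ?_).trans (e.apply_symm_apply y)⟩
      exact h ▸ ⟨e.symm y, ha, e.apply_symm_apply y⟩

namespace SMInstance

variable {M W : Type} [Fintype M] [Fintype W] (I : SMInstance M W)

instance (m : M) : IsStrictTotalOrder W (I.prefM m) := I.prefM_sto m

instance (w : W) : IsStrictTotalOrder M (I.prefW w) := I.prefW_sto w

/-- `MovesDown μ μ' τ ∧ MovesDown μ' μ τ` says that `τ` gives every man the worse of his
partners in `μ` and `μ'`. -/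
def MovesDown (μ μ' : M ≃ W) (τ : M → W) : Prop :=
  ∀ m, τ m ≠ μ m → τ m = μ' m ∧ I.prefM m (μ m) (μ' m)

variable {I}

theorem Stable.prefW_symm_of_prefM {μ : M ≃ W} (hμ : I.Stable μ) {m : M} {w : W}
    (h : I.prefM m w (μ m)) : I.prefW w (μ.symm w) m := by
  rcases trichotomous_of (I.prefW w) (μ.symm w) m with hlt | heq | hgt
  · exact hlt
  · rw [← heq, μ.apply_symm_apply] at h
    exact absurd h (irrefl w)
  · exact absurd ⟨h, hgt⟩ (hμ m w)

theorem Stable.false_of_cross {μ μ' : M ≃ W} (hμ : I.Stable μ) (hμ' : I.Stable μ')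
    {m m' : M} {w : W} (hm : μ m = w) (hm' : μ' m' = w)
    (h : I.prefM m w (μ' m)) (h' : I.prefM m' w (μ m')) : False := by
  have hw : I.prefW w m' m := by
    simpa only [← hm', μ'.symm_apply_apply] using hμ'.prefW_symm_of_prefM h
  have hw' : I.prefW w m m' := by
    simpa only [← hm, μ.symm_apply_apply] using hμ.prefW_symm_of_prefM h'
  exact asymm hw hw'

theorem bijective_of_movesDown {μ μ' : M ≃ W} {τ : M → W} (hμ : I.Stable μ)
    (hμ' : I.Stable μ') (h : I.MovesDown μ μ' τ) (h' : I.MovesDown μ' μ τ) :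
    Function.Bijective τ := by
  set A := {m | τ m ≠ μ m}
  have hsub : μ '' A ⊆ μ' '' A := by
    rintro _ ⟨m, hm, rfl⟩
    refine ⟨μ'.symm (μ m), fun hm'' => ?_, μ'.apply_symm_apply _⟩
    set m'' := μ'.symm (μ m)
    have hμ'm'' : μ' m'' = μ m := μ'.apply_symm_apply _
    have hne : τ m'' ≠ μ' m'' := by
      intro heq
      have : m'' = m := μ.injective (by rw [← hm'', heq, hμ'm''])
      exact hm (this ▸ hm'')
    have hpref := (h' m'' hne).2
    rw [hμ'm''] at hpref
    exact hμ.false_of_cross hμ' rfl hμ'm'' (h m hm).2 hpref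
  exact Equiv.bijective_of_eqOn_of_eqOn_compl μ μ' (fun m hm => (h m hm).1)
    (fun m hm => not_not.mp hm) (Equiv.image_eq_of_image_subset μ μ' (Set.toFinite A) hsub)

theorem Stable.prefW_of_movesDown {μ μ' e : M ≃ W} (hμ' : I.Stable μ') (h : I.MovesDown μ μ' e)
    {m : M} (hm : e m ≠ μ m) : I.prefW (e m) m (μ.symm (e m)) := by
  set m₀ := μ.symm (e m)
  have hμm₀ : μ m₀ = e m := μ.apply_symm_apply _
  have hne : e m₀ ≠ μ m₀ := by
    rw [hμm₀]
    intro heq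
    rw [e.injective heq] at hμm₀
    exact hm hμm₀.symm
  have hpref := (h m₀ hne).2
  rw [hμm₀] at hpref
  simpa only [(h m hm).1, μ'.symm_apply_apply] using hμ'.prefW_symm_of_prefM hpref

theorem not_blocks_of_movesDown {μ μ' e : M ≃ W} (hμ : I.Stable μ) (hμ' : I.Stable μ')
    (h : I.MovesDown μ μ' e) {m : M} (hm : e m = μ m) (w : W) : ¬ I.Blocks e m w := by
  rintro ⟨hwm, hmw⟩
  refine hμ m w ⟨hm ▸ hwm, ?_⟩
  set m' := e.symm w
  have hm'w : e m' = w := e.apply_symm_apply w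
  by_cases hm' : e m' = μ m'
  · rwa [μ.symm_apply_eq.mpr (hm'w.symm.trans hm')]
  · have hwom := hμ'.prefW_of_movesDown h hm'
    rw [hm'w] at hwom
    exact _root_.trans hmw hwom

theorem stable_of_movesDown {μ μ' e : M ≃ W} (hμ : I.Stable μ) (hμ' : I.Stable μ')
    (h : I.MovesDown μ μ' e) (h' : I.MovesDown μ' μ e) : I.Stable e := by
  intro m w
  by_cases hm : e m = μ m
  · exact not_blocks_of_movesDown hμ hμ' h hm w
  · exact not_blocks_of_movesDown hμ' hμ h' (h m hm).1 w

end SMInstance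

/-- Lattice "join for men": if each man is given the one of his partners in the two
stable matchings `μ`, `μ'` that he prefers less, the result is a bijection and a
stable matching. -/
theorem men_worst_of_two_is_stable {M W : Type} [Fintype M] [Fintype W]
    (I : SMInstance M W) (μ μ' : M ≃ W) (hμ : I.Stable μ) (hμ' : I.Stable μ')
    (τ : M → W)
    (hτ_eq : ∀ m : M, μ m = μ' m → τ m = μ m)
    (hτ_pref : ∀ m : M, I.prefM m (μ m) (μ' m) → τ m = μ' m)
    (hτ_pref' : ∀ m : M, I.prefM m (μ' m) (μ m) → τ m = μ m) :
    Function.Bijective τ ∧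
      ∃ e : M ≃ W, (∀ m : M, e m = τ m) ∧ I.Stable e := by
  have h : I.MovesDown μ μ' τ := fun m hm => by
    rcases trichotomous_of (I.prefM m) (μ m) (μ' m) with hlt | heq | hgt
    · exact ⟨hτ_pref m hlt, hlt⟩
    · exact absurd (hτ_eq m heq) hm
    · exact absurd (hτ_pref' m hgt) hm
  have h' : I.MovesDown μ' μ τ := fun m hm => by
    rcases trichotomous_of (I.prefM m) (μ m) (μ' m) with hlt | heq | hgt
    · exact absurd (hτ_pref m hlt) hm
    · exact absurd ((hτ_eq m heq).trans heq) hm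
    · exact ⟨hτ_pref' m hgt, hgt⟩
  have hτ := SMInstance.bijective_of_movesDown hμ hμ' h h'
  exact ⟨hτ, Equiv.ofBijective τ hτ, fun _ => rfl, SMInstance.stable_of_movesDown hμ hμ' h h'⟩
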